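/- arXiv:2012.14302 — 2 statements merged into one kernel-verified Lean document; each statement's English description precedes it below -/
import Mathlib

section
/- Let A be a complete topological ring, B a complete topological A-algebra, and (e_i)_{i∈ℕ} a restricted exponential system on B over A. Then for every b ∈ B the families (e_i(b))_{i∈ℕ} and ((−1)^i e_i(b))_{i∈ℕ} are summable in B, and the maps φ, ψ : B → B defined by φ(b) = ∑_{i∈ℕ} e_i(b) and ψ(b) = ∑_{i∈ℕ} (−1)^i e_i(b) are continuous A-algebra automorphisms of B that are inverse to each other (φ ∘ ψ = ψ ∘ φ = id_B). -/
open Filter Topology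

/-- A sequence of maps between topological additive groups *converges continuously*
to `f₀` if for every point `g` and every open subgroup `H'` of the target there exist an
open subgroup `H` of the source and an index `n₀` such that
`f n (g + x) - f₀ (g + x) ∈ H'` for every `x ∈ H` and every `n ≥ n₀`. -/
def ConvergesContinuouslyTo {G G' : Type*} [AddCommGroup G] [TopologicalSpace G]
    [AddCommGroup G'] [TopologicalSpace G'] (f : ℕ → G → G') (f₀ : G → G') : Prop :=
  ∀ g : G, ∀ H' : AddSubgroup G', IsOpen (H' : Set G') →
    ∃ H : AddSubgroup G, IsOpen (H : Set G) ∧ ∃ n₀ : ℕ,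
      ∀ x ∈ H, ∀ n, n₀ ≤ n → f n (g + x) - f₀ (g + x) ∈ H'

/-- A topological ring has a linear topology admitting a countable decreasing fundamental
system of open ideals starting with the whole ring. -/
def HasLinearRingTopology (A : Type*) [CommRing A] [TopologicalSpace A] : Prop :=
  ∃ a : ℕ → Ideal A, a 0 = ⊤ ∧ (∀ m n : ℕ, n ≤ m → a m ≤ a n) ∧
    (∀ n, IsOpen (a n : Set A)) ∧ ∀ s ∈ nhds (0 : A), ∃ n, (a n : Set A) ⊆ s

/-- A *restricted exponential system* on a topological `A`-algebra `B`
(equivalently, a topologically integrable iterated higher `A`-derivation of `B`):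
a family `(eᵢ)` of continuous `A`-module endomorphisms of `B` with `e₀ = id`,
satisfying the Leibniz rule, the iteration rule `e_j ∘ e_i = (i+j).choose i • e_{i+j}`,
and converging continuously to the zero endomorphism. -/
structure IsRestrictedExpSystem (A B : Type*) [CommRing A] [CommRing B] [Algebra A B]
    [TopologicalSpace B] (e : ℕ → B → B) : Prop where
  map_add : ∀ (i : ℕ) (b b' : B), e i (b + b') = e i b + e i b'
  map_smul : ∀ (i : ℕ) (a : A) (b : B), e i (a • b) = a • e i b
  continuous : ∀ i, Continuous (e i)
  zeroth : ∀ b, e 0 b = b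
  leibniz : ∀ (n : ℕ) (b b' : B),
    e n (b * b') = ∑ p ∈ Finset.HasAntidiagonal.antidiagonal n, e p.1 b * e p.2 b'
  comp : ∀ (i j : ℕ) (b : B), e j (e i b) = (i + j).choose i • e (i + j) b
  conv_zero : ConvergesContinuouslyTo e (fun _ => 0)


/-!
Read `(eᵢ)` as the exponential `exp(T·D)` of a derivation and evaluate it at `t ∈ A`:
`φₜ(b) = ∑ tⁱ eᵢ(b)`. The series converges because `eᵢ(b) → 0` in a complete ring whose
topology is given by open ideals. The Leibniz rule makes `φₜ` multiplicative (a Cauchy product),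
and the iteration rule `eⱼ ∘ eᵢ = C(i+j, i) e_{i+j}` together with the binomial theorem gives
`φₛ ∘ φₜ = φ_{s+t}`; since `φ₀ = id`, the maps `φ₁` and `φ₋₁` are inverse to each other.
Continuity comes from continuous convergence at `0`: near `0`, all the `eₙ` with `n` large
take values in a given open ideal, which is closed, so the tails of the series stay in it.
-/

open Finset

theorem HasLinearRingTopology.isLinearTopology {R : Type*} [CommRing R] [TopologicalSpace R]
    (h : HasLinearRingTopology R) : IsLinearTopology R R := by
  obtain ⟨a, -, -, ha_open, ha_basis⟩ := h
  refine IsLinearTopology.mk_of_hasBasis (R := R) (p := fun _ => True) (s := a) ⟨fun s => ?_⟩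
  refine ⟨fun hs => ?_, fun ⟨n, _, hn⟩ => ?_⟩
  · obtain ⟨n, hn⟩ := ha_basis s hs
    exact ⟨n, trivial, hn⟩
  · exact mem_of_superset ((ha_open n).mem_nhds (a n).zero_mem) hn

theorem IsLinearTopology.nonarchimedeanRing (R : Type*) [Ring R] [TopologicalSpace R]
    [IsTopologicalRing R] [IsLinearTopology R R] : NonarchimedeanRing R where
  is_nonarchimedean U hU := by
    obtain ⟨I, hI, hIU⟩ := IsLinearTopology.hasBasis_open_ideal.mem_iff.mp hU
    exact ⟨⟨I.toAddSubgroup, hI⟩, hIU⟩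

theorem IsLinearTopology.summable_smul_of_tendsto_zero {A B ι : Type*} [CommSemiring A] [Ring B]
    [Algebra A B] [UniformSpace B] [IsUniformAddGroup B] [CompleteSpace B] [IsTopologicalRing B]
    [IsLinearTopology B B] {f : ι → B} (hf : Tendsto f cofinite (𝓝 0)) (c : ι → A) :
    Summable fun k => c k • f k := by
  have := IsLinearTopology.nonarchimedeanRing B
  refine NonarchimedeanAddGroup.summable_of_tendsto_cofinite_zero ?_
  simp_rw [Algebra.smul_def]
  exact IsLinearTopology.tendsto_mul_zero_of_right (fun k => algebraMap A B (c k)) f hf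

theorem Summable.tsum_eq_tsum_sum_antidiagonal {N M : Type*} [AddMonoid N] [HasAntidiagonal N]
    [AddCommMonoid M] [TopologicalSpace M] [ContinuousAdd M] [T3Space M] {f : N × N → M}
    (hf : Summable f) : ∑' p, f p = ∑' n, ∑ p ∈ antidiagonal n, f p := by
  conv_rhs => congr; ext n; rw [← sum_finset_coe, ← tsum_fintype (L := .unconditional _)]
  rw [← HasAntidiagonal.sigmaAntidiagonalEquivProd.tsum_eq f]
  exact Summable.tsum_sigma' (fun n => (hasSum_fintype _).summable)
    (HasAntidiagonal.sigmaAntidiagonalEquivProd.summable_iff.mpr hf)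

theorem tendsto_add_cofinite_atTop : Tendsto (fun p : ℕ × ℕ => p.1 + p.2) cofinite atTop := by
  rw [← Nat.cofinite_eq_atTop]
  exact Tendsto.cofinite_of_finite_preimage_singleton fun n =>
    ((antidiagonal n).finite_toSet.subset fun p hp => by simpa using hp).to_subtype

theorem ConvergesContinuouslyTo.eventually_sub_mem {G G' : Type*} [AddCommGroup G]
    [TopologicalSpace G] [IsTopologicalAddGroup G] [AddCommGroup G'] [TopologicalSpace G']
    {f : ℕ → G → G'} {f₀ : G → G'} (hf : ConvergesContinuouslyTo f f₀) (g : G)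
    {H' : AddSubgroup G'} (hH' : IsOpen (H' : Set G')) :
    ∃ n₀, ∀ᶠ x in 𝓝 g, ∀ n, n₀ ≤ n → f n x - f₀ x ∈ H' := by
  obtain ⟨H, hH, n₀, h⟩ := hf g H' hH'
  refine ⟨n₀, ?_⟩
  have hnear : ∀ᶠ x in 𝓝 g, x - g ∈ H :=
    tendsto_sub_nhds_zero_iff.mpr tendsto_id (hH.mem_nhds H.zero_mem)
  filter_upwards [hnear] with x hx n hn
  simpa using h (x - g) hx n hn

noncomputable def expEval {A B : Type*} [CommRing A] [CommRing B] [Algebra A B]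
    [TopologicalSpace B] (e : ℕ → B → B) (t : A) (b : B) : B :=
  ∑' i, t ^ i • e i b

namespace IsRestrictedExpSystem

variable {A B : Type*} [CommRing A] [CommRing B] [Algebra A B] {e : ℕ → B → B}

section Algebraic

variable [TopologicalSpace B] (he : IsRestrictedExpSystem A B e)
include he

def toContinuousLinearMap (i : ℕ) : B →L[A] B where
  toFun := e i
  map_add' := he.map_add i
  map_smul' := he.map_smul i
  cont := he.continuous i

@[simp]
theorem toContinuousLinearMap_apply (i : ℕ) (b : B) : he.toContinuousLinearMap i b = e i b :=
  rfl

theorem apply_zero (i : ℕ) : e i 0 = 0 :=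
  (he.toContinuousLinearMap i).map_zero

theorem apply_one_eq_zero {n : ℕ} (hn : n ≠ 0) : e n 1 = 0 := by
  induction n using Nat.strong_induction_on with
  | _ n ih =>
    -- Leibniz on `1 * 1`: the middle terms vanish by induction, the outer two are both `e n 1`.
    have h := he.leibniz n 1 1
    rw [one_mul, Finset.Nat.sum_antidiagonal_eq_sum_range_succ_mk, sum_range_succ,
      sum_eq_single_of_mem 0 (mem_range.mpr (Nat.pos_of_ne_zero hn))
        fun k hk hk0 => by rw [ih k (mem_range.mp hk) hk0, zero_mul]] at h
    simp only [he.zeroth, Nat.sub_zero, Nat.sub_self, one_mul, mul_one] at h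
    linear_combination -h

theorem expEval_one (t : A) : expEval e t 1 = 1 := by
  rw [expEval, tsum_eq_single 0 fun n hn => by rw [he.apply_one_eq_zero hn, smul_zero],
    he.zeroth, pow_zero, one_smul]

theorem expEval_zero (b : B) : expEval e (0 : A) b = b := by
  rw [expEval, tsum_eq_single 0 fun n hn => by rw [zero_pow hn, zero_smul], he.zeroth, pow_zero,
    one_smul]

end Algebraic

section Topological

variable [UniformSpace B] [IsTopologicalRing B] (he : IsRestrictedExpSystem A B e)
include he

theorem exists_eventually_apply_mem (b : B) {I : Ideal B} (hI : IsOpen (I : Set B)) :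
    ∃ n₀, ∀ᶠ x in 𝓝 b, ∀ n, n₀ ≤ n → e n x ∈ I := by
  simpa using he.conv_zero.eventually_sub_mem b (H' := I.toAddSubgroup) hI

variable [IsLinearTopology B B]

theorem tendsto_apply_nhds_zero (b : B) : Tendsto (e · b) atTop (𝓝 0) := by
  refine IsLinearTopology.hasBasis_open_ideal.tendsto_right_iff.mpr fun I hI => ?_
  obtain ⟨n₀, h⟩ := he.exists_eventually_apply_mem b hI
  exact eventually_atTop.mpr ⟨n₀, h.self_of_nhds⟩

variable [IsUniformAddGroup B] [CompleteSpace B]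

theorem summable_smul_apply_comp {ι : Type*} {f : ι → ℕ} (hf : Tendsto f cofinite atTop)
    (c : ι → A) (b : B) : Summable fun k => c k • e (f k) b :=
  IsLinearTopology.summable_smul_of_tendsto_zero ((he.tendsto_apply_nhds_zero b).comp hf) c

theorem summable_pow_smul (t : A) (b : B) : Summable fun i => t ^ i • e i b :=
  he.summable_smul_apply_comp (f := id) Nat.cofinite_eq_atTop.le (t ^ ·) b

variable [T2Space B]

theorem expEval_add (t : A) (b b' : B) : expEval e t (b + b') = expEval e t b + expEval e t b' := by
  simp only [expEval, he.map_add, smul_add]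
  exact (he.summable_pow_smul t b).tsum_add (he.summable_pow_smul t b')

theorem expEval_smul (t a : A) (b : B) : expEval e t (a • b) = a • expEval e t b := by
  simp only [expEval, he.map_smul, smul_comm _ a]
  exact (he.summable_pow_smul t b).tsum_const_smul a

theorem expEval_mul (t : A) (b b' : B) : expEval e t (b * b') = expEval e t b * expEval e t b' := by
  have := IsLinearTopology.nonarchimedeanRing B
  have hs := he.summable_pow_smul t b
  have hs' := he.summable_pow_smul t b'
  have hprod := hs.mul_of_nonarchimedean hs'
  rw [expEval, expEval, expEval, hs.tsum_mul_tsum_eq_tsum_sum_antidiagonal hs' hprod]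
  refine tsum_congr fun n => ?_
  rw [he.leibniz, smul_sum]
  refine sum_congr rfl fun p hp => ?_
  rw [← HasAntidiagonal.mem_antidiagonal.mp hp, pow_add, smul_mul_smul_comm]

theorem expEval_expEval (s t : A) (b : B) :
    expEval e s (expEval e t b) = expEval e (s + t) b := by
  set G : ℕ × ℕ → B := fun p =>
    ((p.1 + p.2).choose p.1 * (s ^ p.1 * t ^ p.2) : A) • e (p.1 + p.2) b
  have hG : Summable G := he.summable_smul_apply_comp tendsto_add_cofinite_atTop _ b
  have hrow : ∀ j, s ^ j • e j (expEval e t b) = ∑' i, G (j, i) := fun j => by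
    rw [expEval, ← he.toContinuousLinearMap_apply, ← smul_apply,
      ContinuousLinearMap.map_tsum _ (he.summable_pow_smul t b)]
    refine tsum_congr fun i => ?_
    simp only [G, smul_apply, toContinuousLinearMap_apply, he.map_smul, he.comp, add_comm i j,
      ← Nat.cast_smul_eq_nsmul A, smul_smul]
    rw [Nat.choose_symm_add]
    ring_nf
  calc expEval e s (expEval e t b) = ∑' j, ∑' i, G (j, i) := tsum_congr hrow
    _ = ∑' n, ∑ p ∈ antidiagonal n, G p := by
      rw [← hG.tsum_prod, hG.tsum_eq_tsum_sum_antidiagonal]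
    _ = expEval e (s + t) b := tsum_congr fun n => by
      rw [(Commute.all s t).add_pow', sum_smul]
      refine sum_congr rfl fun p hp => ?_
      simp only [G, HasAntidiagonal.mem_antidiagonal.mp hp, nsmul_eq_mul]

noncomputable def expEvalAlgHom (t : A) : B →ₐ[A] B where
  toFun := expEval e t
  map_one' := he.expEval_one t
  map_mul' := he.expEval_mul t
  map_zero' := by simp only [expEval, he.apply_zero, smul_zero, tsum_zero]
  map_add' := he.expEval_add t
  commutes' a := by rw [Algebra.algebraMap_eq_smul_one, he.expEval_smul, he.expEval_one]

@[simp]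
theorem expEvalAlgHom_apply (t : A) (b : B) : he.expEvalAlgHom t b = expEval e t b :=
  rfl

theorem continuous_expEvalAlgHom (t : A) : Continuous (he.expEvalAlgHom t) := by
  refine continuous_of_continuousAt_zero _ ?_
  rw [ContinuousAt, map_zero, IsLinearTopology.hasBasis_open_ideal.tendsto_right_iff]
  intro I hI
  obtain ⟨n, htail⟩ := he.exists_eventually_apply_mem 0 hI
  have hhead : ∀ᶠ x in 𝓝 0, ∑ i ∈ range n, t ^ i • e i x ∈ I := by
    have hcont : Continuous fun x => ∑ i ∈ range n, t ^ i • e i x :=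
      continuous_finsetSum _ fun i _ => (he.continuous i).const_smul _
    refine hcont.continuousAt.preimage_mem_nhds ?_
    simpa [he.apply_zero] using hI.mem_nhds I.zero_mem
  have hclosed : IsClosed (I : Set B) := AddSubgroup.isClosed_of_isOpen I.toAddSubgroup hI
  filter_upwards [hhead, htail] with x hhead_x htail_x
  rw [expEvalAlgHom_apply, expEval, ← (he.summable_pow_smul t x).sum_add_tsum_nat_add n]
  exact add_mem hhead_x <| tsum_mem hclosed fun i =>
    I.smul_of_tower_mem _ (htail_x _ (Nat.le_add_left n i))

theorem expEvalAlgHom_comp (s t : A) :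
    (he.expEvalAlgHom s).comp (he.expEvalAlgHom t) = he.expEvalAlgHom (s + t) :=
  AlgHom.ext (he.expEval_expEval s t)

theorem expEvalAlgHom_zero : he.expEvalAlgHom 0 = AlgHom.id A B :=
  AlgHom.ext he.expEval_zero

noncomputable def expEvalAlgEquiv (t : A) : B ≃ₐ[A] B :=
  AlgEquiv.ofAlgHom (he.expEvalAlgHom t) (he.expEvalAlgHom (-t))
    (by rw [expEvalAlgHom_comp, add_neg_cancel, expEvalAlgHom_zero])
    (by rw [expEvalAlgHom_comp, neg_add_cancel, expEvalAlgHom_zero])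

@[simp]
theorem expEvalAlgEquiv_apply (t : A) (b : B) : he.expEvalAlgEquiv t b = expEval e t b :=
  rfl

@[simp]
theorem expEvalAlgEquiv_symm_apply (t : A) (b : B) :
    (he.expEvalAlgEquiv t).symm b = expEval e (-t) b :=
  rfl

end Topological

end IsRestrictedExpSystem

theorem evaluation_at_one_is_automorphism_general
    (A B : Type*) [CommRing A]
    [CommRing B] [Algebra A B] [UniformSpace B] [IsUniformAddGroup B] [IsTopologicalRing B]
    [CompleteSpace B] [T2Space B]
    (hB : HasLinearRingTopology B)
    (e : ℕ → B → B) (he : IsRestrictedExpSystem A B e) :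
    (∀ b : B, Summable fun i => e i b) ∧
      (∀ b : B, Summable fun i => (-1 : B) ^ i * e i b) ∧
      ∃ Φ : B ≃ₐ[A] B, Continuous Φ ∧ Continuous Φ.symm ∧
        (∀ b : B, Φ b = ∑' i, e i b) ∧
        (∀ b : B, Φ.symm b = ∑' i, (-1 : B) ^ i * e i b) := by
  have := hB.isLinearTopology
  have neg_one_pow_smul (i : ℕ) (x : B) : (-1 : A) ^ i • x = (-1 : B) ^ i * x := by
    rw [Algebra.smul_def, map_pow, map_neg, map_one]
  refine ⟨fun b => by simpa using he.summable_pow_smul 1 b,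
    fun b => by simpa only [neg_one_pow_smul] using he.summable_pow_smul (-1) b,
    he.expEvalAlgEquiv 1, he.continuous_expEvalAlgHom 1, he.continuous_expEvalAlgHom (-1),
    fun b => by simp [expEval], fun b => by simp [expEval, neg_one_pow_smul]⟩

/-- for a restricted exponential system `(eᵢ)` on `B`, the families
`(eᵢ(b))` and `((-1)ⁱeᵢ(b))` are summable for every `b`, and the maps
`φ(b) = ∑ᵢ eᵢ(b)` and `ψ(b) = ∑ᵢ (-1)ⁱ eᵢ(b)` are mutually inverse continuous
`A`-algebra automorphisms of `B`. -/
theorem evaluation_at_one_is_automorphism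
    (A B : Type*) [CommRing A] [UniformSpace A] [IsUniformAddGroup A] [IsTopologicalRing A]
    [CompleteSpace A] [T2Space A]
    [CommRing B] [Algebra A B] [UniformSpace B] [IsUniformAddGroup B] [IsTopologicalRing B]
    [CompleteSpace B] [T2Space B]
    (hA : HasLinearRingTopology A) (hB : HasLinearRingTopology B)
    (halg : Continuous (algebraMap A B))
    (e : ℕ → B → B) (he : IsRestrictedExpSystem A B e) :
    (∀ b : B, Summable fun i => e i b) ∧
      (∀ b : B, Summable fun i => (-1 : B) ^ i * e i b) ∧
      ∃ Φ : B ≃ₐ[A] B, Continuous Φ ∧ Continuous Φ.symm ∧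
        (∀ b : B, Φ b = ∑' i, e i b) ∧
        (∀ b : B, Φ.symm b = ∑' i, (-1 : B) ^ i * e i b) :=
  evaluation_at_one_is_automorphism_general A B hB e he
end

section
/- Let G be a topological abelian group and G' a Hausdorff topological abelian group, both with linear topologies admitting countable fundamental systems of open subgroups, and let c' : G' → Ĝ' be the separated completion of G'. Let h_n : G → G' (n ∈ ℕ) be continuous homomorphisms converging continuously to the zero homomorphism. Then for every g ∈ G the family (c'(h_n(g)))_{n∈ℕ} is summable in Ĝ', the map s : G → Ĝ' defined by s(g) = ∑_{n∈ℕ} c'(h_n(g)) is a continuous homomorphism, and the sequence of partial sums s_N = ∑_{n=0}^{N} c' ∘ h_n converges continuously to s. -/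
open Filter Topology

/-- A sequence of maps between topological additive groups *converges pointwise* to `f₀`. -/
def ConvergesPointwiseTo {G G' : Type*} [AddCommGroup G] [TopologicalSpace G]
    [AddCommGroup G'] [TopologicalSpace G'] (f : ℕ → G → G') (f₀ : G → G') : Prop :=
  ∀ g : G, ∀ H' : AddSubgroup G', IsOpen (H' : Set G') →
    ∃ n₀ : ℕ, ∀ n, n₀ ≤ n → f n g - f₀ g ∈ H'

/-- A topological abelian group has a linear topology admitting a countable decreasing
fundamental system of open subgroups starting with the whole group. -/
def HasLinearGroupTopology (G : Type*) [AddCommGroup G] [TopologicalSpace G] : Prop :=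
  ∃ H : ℕ → AddSubgroup G, H 0 = ⊤ ∧ (∀ m n : ℕ, n ≤ m → H m ≤ H n) ∧
    (∀ n, IsOpen (H n : Set G)) ∧ ∀ s ∈ nhds (0 : G), ∃ n, (H n : Set G) ⊆ s

/-!
A countable basis of open subgroups makes `G'` nonarchimedean, hence also its completion, and in
a complete nonarchimedean group every sequence tending to `0` is summable. Continuous convergence
to `0` puts the terms `hₙ(g + x)`, `n ≥ n₀`, into a prescribed open subgroup `U` uniformly for
`x` near `0`; open subgroups are closed, so every tail sum lies in `U` as well. This yields both
the continuity of the sum and the continuous convergence of the partial sums.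
-/

theorem HasLinearGroupTopology.nonarchimedeanAddGroup {G : Type*} [AddCommGroup G]
    [TopologicalSpace G] [IsTopologicalAddGroup G] (hG : HasLinearGroupTopology G) :
    NonarchimedeanAddGroup G where
  is_nonarchimedean U hU := by
    obtain ⟨H, -, -, hopen, hbasis⟩ := hG
    obtain ⟨n, hn⟩ := hbasis U hU
    exact ⟨⟨H n, hopen n⟩, hn⟩

section ConvergesContinuously

variable {G α : Type*} [AddCommGroup G] [TopologicalSpace G] [AddCommGroup α]

section Topological

variable [TopologicalSpace α]

theorem ConvergesContinuouslyTo.map {β : Type*} [AddCommGroup β] [TopologicalSpace β]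
    {f : ℕ → G → α} {f₀ : G → α} (hf : ConvergesContinuouslyTo f f₀) (φ : α →+ β)
    (hφ : Continuous φ) :
    ConvergesContinuouslyTo (fun n g => φ (f n g)) (fun g => φ (f₀ g)) := by
  intro g W hW
  obtain ⟨H, hH, n₀, hmem⟩ := hf g (W.comap φ) (hW.preimage hφ)
  exact ⟨H, hH, n₀, fun x hx n hn => by simpa using hmem x hx n hn⟩

theorem convergesContinuouslyTo_zero_iff {f : ℕ → G → α} :
    ConvergesContinuouslyTo f (fun _ => 0) ↔
      ∀ g : G, ∀ U : AddSubgroup α, IsOpen (U : Set α) →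
        ∃ H : AddSubgroup G, IsOpen (H : Set G) ∧ ∃ n₀ : ℕ,
          ∀ x ∈ H, ∀ n, n₀ ≤ n → f n (g + x) ∈ U := by
  simp only [ConvergesContinuouslyTo, sub_zero]

theorem ConvergesContinuouslyTo.tendsto_zero [NonarchimedeanAddGroup α] {f : ℕ → G → α}
    (hf : ConvergesContinuouslyTo f (fun _ => 0)) (g : G) :
    Tendsto (fun n => f n g) atTop (𝓝 0) := by
  refine fun U hU => mem_map.2 ?_
  obtain ⟨V, hVU⟩ := NonarchimedeanAddGroup.is_nonarchimedean U hU
  obtain ⟨H, -, n₀, hmem⟩ := convergesContinuouslyTo_zero_iff.1 hf g V V.isOpen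
  filter_upwards [eventually_ge_atTop n₀] with n hn
  simpa using hVU (hmem 0 H.zero_mem n hn)

end Topological

variable [UniformSpace α] [IsUniformAddGroup α] [NonarchimedeanAddGroup α] [CompleteSpace α]

theorem ConvergesContinuouslyTo.summable {f : ℕ → G → α}
    (hf : ConvergesContinuouslyTo f (fun _ => 0)) (g : G) : Summable fun n => f n g :=
  NonarchimedeanAddGroup.summable_of_tendsto_cofinite_zero
    (Nat.cofinite_eq_atTop ▸ hf.tendsto_zero g)

theorem ConvergesContinuouslyTo.tsum_map_add [T2Space α] {f : ℕ → G →+ α}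
    (hf : ConvergesContinuouslyTo (fun n x => f n x) (fun _ => 0)) (g g' : G) :
    ∑' n, f n (g + g') = ∑' n, f n g + ∑' n, f n g' := by
  simp only [map_add]
  exact (hf.summable g).tsum_add (hf.summable g')

theorem ConvergesContinuouslyTo.continuous_tsum [T2Space α] [IsTopologicalAddGroup G]
    {f : ℕ → G →+ α} (hcont : ∀ n, Continuous (f n))
    (hf : ConvergesContinuouslyTo (fun n x => f n x) (fun _ => 0)) :
    Continuous fun g => ∑' n, f n g := by
  let s : G →+ α := AddMonoidHom.mk' (fun g => ∑' n, f n g) hf.tsum_map_add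
  refine continuous_of_continuousAt_zero s fun U hU => mem_map.2 ?_
  rw [map_zero] at hU
  obtain ⟨V, hVU⟩ := NonarchimedeanAddGroup.is_nonarchimedean U hU
  obtain ⟨H, hH, n₀, hmem⟩ := convergesContinuouslyTo_zero_iff.1 hf 0 V V.isOpen
  -- Near `0` the finitely many terms with `n < n₀` are small by continuity, the rest uniformly.
  have hnhds : (H : Set G) ∩ ⋂ k ∈ Finset.range n₀, f k ⁻¹' V ∈ 𝓝 0 :=
    inter_mem (hH.mem_nhds H.zero_mem) <| (biInter_finset_mem _).2 fun k _ =>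
      (V.isOpen.preimage (hcont k)).mem_nhds (by simp)
  refine mem_of_superset hnhds fun x ⟨hxH, hxlow⟩ => hVU (tsum_mem V.isClosed fun n => ?_)
  rcases lt_or_ge n n₀ with hlt | hge
  · exact Set.mem_iInter₂.1 hxlow n (Finset.mem_range.2 hlt)
  · simpa using hmem x hxH n hge

theorem ConvergesContinuouslyTo.partialSums [T2Space α] {f : ℕ → G → α}
    (hf : ConvergesContinuouslyTo f (fun _ => 0)) :
    ConvergesContinuouslyTo (fun N g => ∑ n ∈ Finset.range (N + 1), f n g)
      (fun g => ∑' n, f n g) := by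
  intro g W hW
  obtain ⟨H, hH, n₀, hmem⟩ := convergesContinuouslyTo_zero_iff.1 hf g W hW
  refine ⟨H, hH, n₀, fun x hx N hN => ?_⟩
  have htail : ∑' i, f (i + (N + 1)) (g + x) ∈ W :=
    tsum_mem (W.isClosed_of_isOpen hW) fun i => hmem x hx _ (by omega)
  have hsplit := (hf.summable (g + x)).sum_add_tsum_nat_add (N + 1)
  beta_reduce
  rw [← hsplit, sub_add_cancel_left]
  exact W.neg_mem htail

end ConvergesContinuously

open UniformSpace in
theorem sum_of_continuously_convergent_sequence_general
    (G G' : Type*) [AddCommGroup G] [UniformSpace G] [IsUniformAddGroup G]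
    [AddCommGroup G'] [UniformSpace G'] [IsUniformAddGroup G']
    (hG' : HasLinearGroupTopology G')
    (h : ℕ → G →+ G') (hcont : ∀ n, Continuous (h n))
    (hconv : ConvergesContinuouslyTo (fun n x => h n x) (fun _ => 0)) :
    (∀ g : G, Summable fun n => ((h n g : G') : Completion G')) ∧
      Continuous (fun g : G => ∑' n, ((h n g : G') : Completion G')) ∧
      (∀ g g' : G, (∑' n, ((h n (g + g') : G') : Completion G')) =
        (∑' n, ((h n g : G') : Completion G')) + ∑' n, ((h n g' : G') : Completion G')) ∧
      ConvergesContinuouslyTo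
        (fun N g => ∑ n ∈ Finset.range (N + 1), ((h n g : G') : Completion G'))
        (fun g => ∑' n, ((h n g : G') : Completion G')) := by
  have := hG'.nonarchimedeanAddGroup
  have hconv' : ConvergesContinuouslyTo (fun n x => Completion.toCompl (h n x)) (fun _ => 0) := by
    simpa only [map_zero] using hconv.map Completion.toCompl Completion.continuous_toCompl
  let c : ℕ → G →+ Completion G' := fun n => Completion.toCompl.comp (h n)
  exact ⟨hconv'.summable,
    hconv'.continuous_tsum (f := c) fun n => Completion.continuous_toCompl.comp (hcont n),
    hconv'.tsum_map_add (f := c), hconv'.partialSums⟩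

open UniformSpace in
/-- if a sequence of continuous homomorphisms `(hₙ)` converges continuously
to the zero homomorphism, then for every `g` the family `(c'(hₙ(g)))` is summable in the
separated completion `Ĝ'`, the sum `s(g) = ∑ₙ c'(hₙ(g))` defines a continuous
homomorphism `s : G → Ĝ'`, and the partial sums `s_N = ∑_{n=0}^{N} c' ∘ hₙ` converge
continuously to `s`. -/
theorem sum_of_continuously_convergent_sequence
    (G G' : Type*) [AddCommGroup G] [UniformSpace G] [IsUniformAddGroup G]
    [AddCommGroup G'] [UniformSpace G'] [IsUniformAddGroup G'] [T2Space G']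
    (hG : HasLinearGroupTopology G) (hG' : HasLinearGroupTopology G')
    (h : ℕ → G →+ G') (hcont : ∀ n, Continuous (h n))
    (hconv : ConvergesContinuouslyTo (fun n x => h n x) (fun _ => 0)) :
    (∀ g : G, Summable fun n => ((h n g : G') : Completion G')) ∧
      Continuous (fun g : G => ∑' n, ((h n g : G') : Completion G')) ∧
      (∀ g g' : G, (∑' n, ((h n (g + g') : G') : Completion G')) =
        (∑' n, ((h n g : G') : Completion G')) + ∑' n, ((h n g' : G') : Completion G')) ∧
      ConvergesContinuouslyTo
        (fun N g => ∑ n ∈ Finset.range (N + 1), ((h n g : G') : Completion G'))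
        (fun g => ∑' n, ((h n g : G') : Completion G')) :=
  sum_of_continuously_convergent_sequence_general G G' hG' h hcont hconv
end
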